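/- Let F be a commutative ring, n ≥ 1, d ≥ 1, and let m be an element of the free magma on Fin n of degree d' ≤ d and depth l. Let Φ(m) ∈ C'_d(R) be the evaluation of m at (Z_1,…,Z_n) under the anticommutator product ⊙ (via the unique magma homomorphism from the free magma on Fin n to (C'_d(R), ⊙) sending x_i ↦ Z_i). Then: (1) for every 1 ≤ k1 ≤ d − d' + 1 and every 1 ≤ k2 ≤ d − l + 1, the (k1, k1 + d', k2) entry of Φ(m) equals the sum, over all choices ε of a Boolean for each internal node of m, of the product Π_{t=1}^{d'} z_{σ_{m_ε}(t), t + k1 − 1, l^{m_ε}_t + k2 − 1}; and (2) every entry Φ(m)[i1, i2, i3] with i2 ≠ i1 + d', as well as every entry with i2 = i1 + d' but i3 > d − l + 1, is zero. -/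

import Mathlib

noncomputable section

open scoped BigOperators

namespace NAPIT

/-- The list of (leaf label, leaf level) pairs of a nonassociative monomial (element of the
free magma), in left-to-right order, where the root of the monomial is at level `s`. -/
def leafData {n : ℕ} : FreeMagma (Fin n) → ℕ → List (Fin n × ℕ)
  | FreeMagma.of i, s => [(i, s)]
  | FreeMagma.mul x y, s => leafData x (s + 1) ++ leafData y (s + 1)

/-- The degree (number of leaves) of a nonassociative monomial. -/
def degM {n : ℕ} : FreeMagma (Fin n) → ℕ
  | FreeMagma.of _ => 1
  | FreeMagma.mul x y => degM x + degM y

/-- The depth of a nonassociative monomial (root at level 1; the depth is the maximal level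
of a leaf). -/
def depthM {n : ℕ} : FreeMagma (Fin n) → ℕ
  | FreeMagma.of _ => 1
  | FreeMagma.mul x y => max (depthM x) (depthM y) + 1

/-- Evaluation of a nonassociative monomial at `b : Fin n → A`, using `mul` as the product on
`A`; this is the unique magma homomorphism `FreeMagma (Fin n) → (A, mul)` with `x_i ↦ b i`. -/
def evalWith {n : ℕ} {A : Type*} (mul : A → A → A) (b : Fin n → A) : FreeMagma (Fin n) → A
  | FreeMagma.of i => b i
  | FreeMagma.mul x y => mul (evalWith mul b x) (evalWith mul b y)

/-- The multiset of all variants `m_ε` of a monomial `m`, where `ε` ranges over all choices of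
a Boolean for each internal node of `m`, and `m_ε` is obtained from `m` by swapping the two
children at exactly those internal nodes where `ε` is true (counted with multiplicity). -/
def variants {n : ℕ} : FreeMagma (Fin n) → Multiset (FreeMagma (Fin n))
  | FreeMagma.of i => {FreeMagma.of i}
  | FreeMagma.mul x y =>
      (variants x).bind fun x' => (variants y).bind fun y' =>
        {FreeMagma.mul x' y', FreeMagma.mul y' x'}

/-- The underlying module of the algebra `A'_d(R)`: arrays `x[i,j,k]` with
`i, j ∈ Fin (d+1)`, `k ∈ Fin d` (zero-based; the paper's indices are shifted by one). -/
def Arr (d : ℕ) (R : Type*) : Type _ := Fin (d + 1) → Fin (d + 1) → Fin d → R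

namespace Arr

variable {d : ℕ} {R : Type*}

instance instAddCommGroup [AddCommGroup R] : AddCommGroup (Arr d R) :=
  inferInstanceAs (AddCommGroup (Fin (d + 1) → Fin (d + 1) → Fin d → R))

instance instModule {S : Type*} [Semiring S] [AddCommGroup R] [Module S R] :
    Module S (Arr d R) :=
  inferInstanceAs (Module S (Fin (d + 1) → Fin (d + 1) → Fin d → R))

/-- The bilinear product `∘` of `A'_d(R)`:
`(x ∘ y)[i,j,k] = ∑_{l} x[i,l,k+1] * y[l,j,k+1]` if `k+1` is a legal third index, else `0`. -/
def aprod [CommRing R] (x y : Arr d R) : Arr d R := fun i j k =>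
  if h : (k : ℕ) + 1 < d then
    ∑ l : Fin (d + 1), x i l ⟨(k : ℕ) + 1, h⟩ * y l j ⟨(k : ℕ) + 1, h⟩
  else 0

instance instMul [CommRing R] : Mul (Arr d R) := ⟨aprod⟩

end Arr

/-- The algebra `C'_d(R)`: same underlying module as `A'_d(R)`, with the anticommutator
product `a ⊙ b = a ∘ b + b ∘ a`. -/
def CArr (d : ℕ) (R : Type*) : Type _ := Arr d R

namespace CArr

variable {d : ℕ} {R : Type*}

/-- The identity map `A'_d(R) → C'_d(R)` of underlying modules. -/
def ofArr (x : Arr d R) : CArr d R := x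

/-- The identity map `C'_d(R) → A'_d(R)` of underlying modules. -/
def toArr (x : CArr d R) : Arr d R := x

instance instAddCommGroup [AddCommGroup R] : AddCommGroup (CArr d R) :=
  inferInstanceAs (AddCommGroup (Arr d R))

instance instModule {S : Type*} [Semiring S] [AddCommGroup R] [Module S R] :
    Module S (CArr d R) :=
  inferInstanceAs (Module S (Arr d R))

instance instMul [CommRing R] : Mul (CArr d R) :=
  ⟨fun a b => ofArr (toArr a * toArr b + toArr b * toArr a)⟩

end CArr

/-- The element `Z_i ∈ A'_d(R)`, `R = MvPolynomial (Fin n × Fin d × Fin d) F`, whose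
`(j, j+1, k)` entry is the indeterminate `z_{i,j,k}` and whose other entries vanish. -/
def Z (F : Type*) [CommRing F] (n d : ℕ) (i : Fin n) :
    Arr d (MvPolynomial (Fin n × Fin d × Fin d) F) := fun j j' k =>
  if h : (j : ℕ) < d ∧ (j' : ℕ) = (j : ℕ) + 1 then
    MvPolynomial.X (i, ⟨(j : ℕ), h.1⟩, k)
  else 0

/-- The element `Z_i` regarded as an element of `C'_d(R)`. -/
def ZC (F : Type*) [CommRing F] (n d : ℕ) (i : Fin n) :
    CArr d (MvPolynomial (Fin n × Fin d × Fin d) F) := CArr.ofArr (Z F n d i)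

/-- The monomial `∏_{t=1}^{d'} z_{σ_m(t), (t-1) + k1, (l^m_t - 1) + k2}` associated to a
nonassociative monomial `m` of degree `d'` and offsets `k1, k2` (all indices zero-based; the
paper's 1-based offsets are `k1 + 1`, `k2 + 1`).  Indices which would fall out of range are
discarded (this never happens in the intended range of parameters). -/
def monProd (F : Type*) [CommRing F] {n : ℕ} (d : ℕ) (k1 k2 : ℕ) (m : FreeMagma (Fin n)) :
    MvPolynomial (Fin n × Fin d × Fin d) F :=
  (((leafData m 1).zipIdx.map Prod.swap).map fun p =>
    if h : p.1 + k1 < d ∧ p.2.2 - 1 + k2 < d then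
      MvPolynomial.X (p.2.1, ⟨p.1 + k1, h.1⟩, ⟨p.2.2 - 1 + k2, h.2⟩)
    else 0).prod

/-- `ψ(m) = ∑_ε ∏_{t=1}^{d'} z_{σ_{m_ε}(t), t, l^{m_ε}_t}` (1-based), the sum running over all
choices `ε` of a Boolean for each internal node of `m`. -/
def psi (F : Type*) [CommRing F] {n : ℕ} (d : ℕ) (m : FreeMagma (Fin n)) :
    MvPolynomial (Fin n × Fin d × Fin d) F :=
  ((variants m).map fun m' => monProd F d 0 0 m').sum

/-- The coefficient function of an element of the free nonunital nonassociative algebra. -/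
def coeffOf {F : Type*} [Semiring F] {n : ℕ}
    (f : FreeNonUnitalNonAssocAlgebra F (Fin n)) : FreeMagma (Fin n) →₀ F := f.coeff

/-- Evaluation of an element of the free nonunital nonassociative algebra on `x_1, …, x_n` at
the tuple `b`, with `mul` as the product of the target: the linear extension of
`m ↦ evalWith mul b m`, i.e. the unique nonunital `F`-algebra homomorphism sending
`x_i ↦ b i` into `(A, mul)`. -/
def evalNAWith {F : Type*} [Semiring F] {n : ℕ} {A : Type*}
    [AddCommMonoid A] [Module F A] (mul : A → A → A) (b : Fin n → A)
    (f : FreeNonUnitalNonAssocAlgebra F (Fin n)) : A :=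
  Finsupp.sum (coeffOf f) fun m c => c • evalWith mul b m

/-- Evaluation of an element of the free nonunital nonassociative algebra at a tuple `b` of
elements of a (not necessarily unital/associative) algebra `A`: the unique nonunital
`F`-algebra homomorphism sending `x_i ↦ b i`. -/
def evalNA {F : Type*} [Semiring F] {n : ℕ} {A : Type*}
    [AddCommMonoid A] [Mul A] [Module F A] (b : Fin n → A)
    (f : FreeNonUnitalNonAssocAlgebra F (Fin n)) : A :=
  evalNAWith (· * ·) b f

/-- Evaluation of an element of the unitization of the free nonunital nonassociative algebra
at a tuple `b` of elements of the unitization of `A`: the unique unital `F`-algebra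
homomorphism sending `x_i ↦ b i` (and the adjoined unit to the unit). -/
def evalUnit {F : Type*} [CommSemiring F] {n : ℕ} {A : Type*}
    [AddCommMonoid A] [Mul A] [Module F A] (b : Fin n → Unitization F A)
    (f : Unitization F (FreeNonUnitalNonAssocAlgebra F (Fin n))) : Unitization F A :=
  Unitization.inl f.fst + evalNA b f.snd

/-- The commutativity congruence on the free magma: the smallest equivalence relation with
`m₁ * m₂ ≈ m₂ * m₁` and compatible with the product. -/
inductive CommEq {n : ℕ} : FreeMagma (Fin n) → FreeMagma (Fin n) → Prop
  | refl (m : FreeMagma (Fin n)) : CommEq m m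
  | symm {a b : FreeMagma (Fin n)} : CommEq a b → CommEq b a
  | trans {a b c : FreeMagma (Fin n)} : CommEq a b → CommEq b c → CommEq a c
  | comm (a b : FreeMagma (Fin n)) : CommEq (a * b) (b * a)
  | mul_congr {a a' b b' : FreeMagma (Fin n)} :
      CommEq a a' → CommEq b b' → CommEq (a * b) (a' * b')

/-- The basis monomial `m` of the free nonunital nonassociative algebra. -/
def single1 (F : Type*) [Semiring F] {n : ℕ} (m : FreeMagma (Fin n)) :
    FreeNonUnitalNonAssocAlgebra F (Fin n) :=
  MonoidAlgebra.ofCoeff (Finsupp.single m 1 : FreeMagma (Fin n) →₀ F)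

/-- `I_comm`: the `F`-linear span of `{m − m' : m ≈ m'}` inside the free nonunital
nonassociative algebra. -/
def Icomm (F : Type*) [Field F] (n : ℕ) :
    Submodule F (FreeNonUnitalNonAssocAlgebra F (Fin n)) :=
  Submodule.span F
    {x | ∃ m m' : FreeMagma (Fin n), CommEq m m' ∧ x = single1 F m - single1 F m'}

/-!
Every `Z_i` is supported on the superdiagonal `j = i + 1`, and the product `∘` of an array
supported on `j = i + p` with one supported on `j = i + q` is supported on `j = i + p + q`,
its third index shifted by one. Hence, by induction on `m`, `Φ(m)` is supported on
`j = i + deg m`, and since `x ⊙ y = x ∘ y + y ∘ x` its entries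
`S(m)(k1, k2) := Φ(m)[k1, k1 + deg m, k2]` obey
`S(xy)(k1, k2) = S(x)(k1, k2+1) S(y)(k1 + deg x, k2+1) + S(y)(k1, k2+1) S(x)(k1 + deg y, k2+1)`.
The sum over swap patterns `ε` satisfies the same recursion: `ε` either keeps or swaps the
two subtrees at the root, and each leaf of a subtree sits one level deeper in the product.
Entries with `d < i3 + depth m` vanish because the deepest leaf would need an indeterminate
whose third index is at least `d`.
-/

section Monomials

variable {n : ℕ}

@[simp] lemma leafData_mul (x y : FreeMagma (Fin n)) (s : ℕ) :
    leafData (x * y) s = leafData x (s + 1) ++ leafData y (s + 1) := rfl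

@[simp] lemma degM_mul (x y : FreeMagma (Fin n)) : degM (x * y) = degM x + degM y := rfl

@[simp] lemma depthM_mul (x y : FreeMagma (Fin n)) :
    depthM (x * y) = max (depthM x) (depthM y) + 1 := rfl

lemma leafData_succ (m : FreeMagma (Fin n)) (s : ℕ) :
    leafData m (s + 1) = (leafData m s).map fun p => (p.1, p.2 + 1) := by
  induction m generalizing s with
  | ih1 i => simp [leafData]
  | ih2 x y ihx ihy => simp [leafData, ihx (s + 1), ihy (s + 1)]

lemma length_leafData (m : FreeMagma (Fin n)) (s : ℕ) : (leafData m s).length = degM m := by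
  induction m generalizing s with
  | ih1 i => simp [leafData, degM]
  | ih2 x y ihx ihy => simp [leafData, degM, ihx, ihy]

lemma le_level_of_mem_leafData {m : FreeMagma (Fin n)} {s : ℕ} {p : Fin n × ℕ}
    (hp : p ∈ leafData m s) : s ≤ p.2 := by
  induction m generalizing s with
  | ih1 i => simp_all [leafData]
  | ih2 x y ihx ihy =>
    rcases List.mem_append.1 hp with hp | hp
    · exact (ihx hp).trans' (Nat.le_succ s)
    · exact (ihy hp).trans' (Nat.le_succ s)

lemma one_le_depthM (m : FreeMagma (Fin n)) : 1 ≤ depthM m := by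
  cases m <;> simp [depthM]

lemma degM_depthM_of_mem_variants {m m' : FreeMagma (Fin n)} (h : m' ∈ variants m) :
    degM m' = degM m ∧ depthM m' = depthM m := by
  induction m generalizing m' with
  | ih1 i => simp_all [variants]
  | ih2 x y ihx ihy =>
    simp only [variants, Multiset.mem_bind, Multiset.insert_eq_cons, Multiset.mem_cons,
      Multiset.mem_singleton] at h
    obtain ⟨x', hx', y', hy', rfl | rfl⟩ := h <;>
    · obtain ⟨hdx, hlx⟩ := ihx hx'
      obtain ⟨hdy, hly⟩ := ihy hy'
      simp [degM, depthM, hdx, hlx, hdy, hly, add_comm, max_comm]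

end Monomials

section LeafProducts

variable (F : Type*) [CommRing F] {n : ℕ} (d : ℕ)

def leafVar (k1 k2 : ℕ) (p : Fin n × ℕ) : MvPolynomial (Fin n × Fin d × Fin d) F :=
  if h : k1 < d ∧ p.2 - 1 + k2 < d then
    MvPolynomial.X (p.1, ⟨k1, h.1⟩, ⟨p.2 - 1 + k2, h.2⟩)
  else 0

lemma leafVar_succ_level (k1 k2 : ℕ) (p : Fin n × ℕ) (hp : 1 ≤ p.2) :
    leafVar F d k1 k2 (p.1, p.2 + 1) = leafVar F d k1 (k2 + 1) p := by
  simp only [leafVar, show p.2 + 1 - 1 + k2 = p.2 - 1 + (k2 + 1) by omega]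

lemma monProd_eq_prod_leafVar (k1 k2 : ℕ) (m : FreeMagma (Fin n)) :
    monProd F d k1 k2 m =
      ((leafData m 1).zipIdx.map fun q => leafVar F d (q.2 + k1) k2 q.1).prod := by
  simp only [monProd, List.map_map]
  rfl

lemma monProd_of (k1 k2 : ℕ) (i : Fin n) :
    monProd F d k1 k2 (FreeMagma.of i) =
      if h : k1 < d ∧ k2 < d then MvPolynomial.X (i, ⟨k1, h.1⟩, ⟨k2, h.2⟩) else 0 := by
  simp [monProd_eq_prod_leafVar, leafData, leafVar]

lemma monProd_mul (k1 k2 : ℕ) (x y : FreeMagma (Fin n)) :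
    monProd F d k1 k2 (x * y) =
      monProd F d k1 (k2 + 1) x * monProd F d (k1 + degM x) (k2 + 1) y := by
  simp only [monProd_eq_prod_leafVar]
  rw [leafData_mul, leafData_succ x 1, leafData_succ y 1, List.zipIdx_append, List.map_append,
    List.prod_append, List.length_map, length_leafData, List.zipIdx_map, List.zipIdx_map,
    Nat.zero_add, List.zipIdx_eq_map_add (i := degM x)]
  simp only [List.map_map]
  congr 1 <;> refine congrArg List.prod (List.map_congr_left fun q hq => ?_)
  all_goals
    have hlev : 1 ≤ q.1.2 := le_level_of_mem_leafData (List.fst_mem_of_mem_zipIdx hq)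
    simp only [Function.comp_apply, Prod.map_fst, Prod.map_snd, id_eq,
      leafVar_succ_level F d _ _ _ hlev]
  congr 1
  ring

lemma monProd_eq_zero_of_lt_depthM {k1 k2 : ℕ} {m : FreeMagma (Fin n)}
    (h : d < k2 + depthM m) : monProd F d k1 k2 m = 0 := by
  induction m generalizing k1 k2 with
  | ih1 i =>
    rw [monProd_of, dif_neg]
    simp only [depthM] at h
    omega
  | ih2 x y ihx ihy =>
    rw [monProd_mul]
    rcases le_total (depthM y) (depthM x) with hyx | hxy
    · rw [ihx (by simp only [depthM] at h; omega), zero_mul]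
    · rw [ihy (by simp only [depthM] at h; omega), mul_zero]

end LeafProducts

section VariantSums

variable (F : Type*) [CommRing F] {n : ℕ} (d : ℕ)

def variantSum (m : FreeMagma (Fin n)) (k1 k2 : ℕ) : MvPolynomial (Fin n × Fin d × Fin d) F :=
  ((variants m).map fun m' => monProd F d k1 k2 m').sum

lemma variantSum_of (i : Fin n) (k1 k2 : ℕ) :
    variantSum F d (FreeMagma.of i) k1 k2 = monProd F d k1 k2 (FreeMagma.of i) := by
  simp [variantSum, variants]

lemma variantSum_mul (x y : FreeMagma (Fin n)) (k1 k2 : ℕ) :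
    variantSum F d (x * y) k1 k2 =
      variantSum F d x k1 (k2 + 1) * variantSum F d y (k1 + degM x) (k2 + 1) +
        variantSum F d y k1 (k2 + 1) * variantSum F d x (k1 + degM y) (k2 + 1) := by
  have hpair : ∀ x' ∈ variants x, ∀ y' ∈ variants y,
      monProd F d k1 k2 (x' * y') + monProd F d k1 k2 (y' * x') =
        monProd F d k1 (k2 + 1) x' * monProd F d (k1 + degM x) (k2 + 1) y' +
          monProd F d k1 (k2 + 1) y' * monProd F d (k1 + degM y) (k2 + 1) x' := by
    intro x' hx' y' hy'
    rw [monProd_mul, monProd_mul, (degM_depthM_of_mem_variants hx').1,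
      (degM_depthM_of_mem_variants hy').1]
  calc variantSum F d (x * y) k1 k2
      = ((variants x).map fun x' => ((variants y).map fun y' =>
          monProd F d k1 k2 (x' * y') + monProd F d k1 k2 (y' * x')).sum).sum := by
        simp [variantSum, variants, Multiset.map_bind, Multiset.sum_bind]
    _ = ((variants x).map fun x' => ((variants y).map fun y' =>
          monProd F d k1 (k2 + 1) x' * monProd F d (k1 + degM x) (k2 + 1) y' +
            monProd F d k1 (k2 + 1) y' * monProd F d (k1 + degM y) (k2 + 1) x').sum).sum :=
        congrArg Multiset.sum <| Multiset.map_congr rfl fun x' hx' =>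
          congrArg Multiset.sum <| Multiset.map_congr rfl fun y' hy' => hpair x' hx' y' hy'
    _ = _ := by
        simp only [variantSum, Multiset.sum_map_add, Multiset.sum_map_mul_left,
          Multiset.sum_map_mul_right]

lemma variantSum_eq_zero_of_lt_depthM {m : FreeMagma (Fin n)} {k1 k2 : ℕ}
    (h : d < k2 + depthM m) : variantSum F d m k1 k2 = 0 :=
  Multiset.sum_eq_zero fun _ hp => by
    obtain ⟨m', hm', rfl⟩ := Multiset.mem_map.1 hp
    exact monProd_eq_zero_of_lt_depthM F d ((degM_depthM_of_mem_variants hm').2 ▸ h)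

end VariantSums

namespace Arr

variable {d : ℕ} {R : Type*}

def superdiag [Zero R] (p : ℕ) (f : ℕ → ℕ → R) : Arr d R := fun i j k =>
  if (j : ℕ) = i + p then f i k else 0

lemma superdiag_add [AddCommGroup R] (p : ℕ) (f g : ℕ → ℕ → R) :
    (superdiag p f + superdiag p g : Arr d R) = superdiag p (f + g) := by
  funext i j k
  change superdiag p f i j k + superdiag p g i j k = _
  simp only [superdiag]
  split_ifs <;> simp

lemma superdiag_mul_superdiag [CommRing R] (p q : ℕ) (f g : ℕ → ℕ → R) :
    (superdiag p f * superdiag q g : Arr d R) =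
      superdiag (p + q) fun i k =>
        if k + 1 < d then f i (k + 1) * g (i + p) (k + 1) else 0 := by
  funext i j k
  change aprod (superdiag p f) (superdiag q g) i j k = _
  simp only [aprod, superdiag]
  by_cases hk : (k : ℕ) + 1 < d
  swap
  · simp [hk]
  rw [dif_pos hk]
  rcases lt_or_ge ((i : ℕ) + p) (d + 1) with hip | hip
  · rw [Finset.sum_eq_single ⟨i + p, hip⟩]
    · simp [hk, add_assoc]
    · intro l _ hl
      rw [if_neg fun h => hl (Fin.ext h), zero_mul]
    · simp
  · rw [Finset.sum_eq_zero, if_neg (by omega)]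
    intro l _
    rw [if_neg (by omega), zero_mul]

end Arr

lemma evalWith_anticomm_Z_eq_superdiag {F : Type*} [CommRing F] {n d : ℕ}
    (m : FreeMagma (Fin n)) :
    evalWith (fun a b : Arr d (MvPolynomial (Fin n × Fin d × Fin d) F) => a * b + b * a)
      (Z F n d) m = Arr.superdiag (degM m) (variantSum F d m) := by
  induction m with
  | ih1 i =>
    funext j j' k
    simp only [evalWith, Z, Arr.superdiag, degM, variantSum_of, monProd_of]
    split_ifs <;> simp_all
  | ih2 x y ihx ihy =>
    change evalWith _ _ x * evalWith _ _ y + evalWith _ _ y * evalWith _ _ x = _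
    rw [ihx, ihy, Arr.superdiag_mul_superdiag, Arr.superdiag_mul_superdiag,
      Nat.add_comm (degM y), Arr.superdiag_add, degM_mul]
    congr 1
    funext i k
    simp only [Pi.add_apply]
    split_ifs with hk
    · rw [variantSum_mul]
    · have := one_le_depthM x
      rw [variantSum_eq_zero_of_lt_depthM F d (by simp only [depthM_mul]; omega), add_zero]

theorem entries_of_anticommutator_eval_at_Z_general {F : Type*} [CommRing F] (n d : ℕ)
    (m : FreeMagma (Fin n)) (d' l : ℕ)
    (hdeg : degM m = d') (hdepth : depthM m = l) :
    (∀ (i1 i2 : Fin (d + 1)) (i3 : Fin d),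
        (i2 : ℕ) = (i1 : ℕ) + d' → (i3 : ℕ) + l ≤ d →
        evalWith (fun a b : Arr d (MvPolynomial (Fin n × Fin d × Fin d) F) =>
            a * b + b * a) (Z F n d) m i1 i2 i3
          = ((variants m).map fun m' => monProd F d (i1 : ℕ) (i3 : ℕ) m').sum) ∧
    (∀ (i1 i2 : Fin (d + 1)) (i3 : Fin d),
        (i2 : ℕ) ≠ (i1 : ℕ) + d' →
        evalWith (fun a b : Arr d (MvPolynomial (Fin n × Fin d × Fin d) F) =>
            a * b + b * a) (Z F n d) m i1 i2 i3 = 0) ∧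
    (∀ (i1 i2 : Fin (d + 1)) (i3 : Fin d),
        (i2 : ℕ) = (i1 : ℕ) + d' → d < (i3 : ℕ) + l →
        evalWith (fun a b : Arr d (MvPolynomial (Fin n × Fin d × Fin d) F) =>
            a * b + b * a) (Z F n d) m i1 i2 i3 = 0) := by
  subst hdeg hdepth
  simp only [evalWith_anticomm_Z_eq_superdiag, Arr.superdiag]
  refine ⟨fun i1 i2 i3 hi2 _ => ?_, fun i1 i2 i3 hi2 => if_neg hi2, fun i1 i2 i3 hi2 hi3 => ?_⟩
  · rw [if_pos hi2, variantSum]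
  · rw [if_pos hi2, variantSum_eq_zero_of_lt_depthM F d hi3]

/-- Claim 3.7 of the paper.  Let `F` be a commutative ring, `n, d ≥ 1`, and
let `m` be an element of the free magma on `Fin n` of degree `d' ≤ d` and depth `l`.  Let
`Φ(m) ∈ C'_d(R)` be the evaluation of `m` at `(Z_1, …, Z_n)` under the anticommutator product
`⊙` (`a ⊙ b = a ∘ b + b ∘ a`).  Then (all indices zero-based; the paper's 1-based indices are
obtained by adding one):
(1) for every entry position `(i1, i2, i3)` with `i2 = i1 + d'` and `i3 + l ≤ d`, the entry
    of `Φ(m)` there equals the sum, over all choices `ε` of a Boolean for each internal node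
    of `m`, of `∏_{t=1}^{d'} z_{σ_{m_ε}(t), (t-1) + i1, (l^{m_ε}_t - 1) + i3}`;
(2) every entry with `i2 ≠ i1 + d'` is zero; and
(3) every entry with `i2 = i1 + d'` but `d < i3 + l` is zero. -/
theorem entries_of_anticommutator_eval_at_Z {F : Type*} [CommRing F] (n d : ℕ)
    (hn : 1 ≤ n) (hd : 1 ≤ d) (m : FreeMagma (Fin n)) (d' l : ℕ)
    (hdeg : degM m = d') (hd' : d' ≤ d) (hdepth : depthM m = l) :
    (∀ (i1 i2 : Fin (d + 1)) (i3 : Fin d),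
        (i2 : ℕ) = (i1 : ℕ) + d' → (i3 : ℕ) + l ≤ d →
        evalWith (fun a b : Arr d (MvPolynomial (Fin n × Fin d × Fin d) F) =>
            a * b + b * a) (Z F n d) m i1 i2 i3
          = ((variants m).map fun m' => monProd F d (i1 : ℕ) (i3 : ℕ) m').sum) ∧
    (∀ (i1 i2 : Fin (d + 1)) (i3 : Fin d),
        (i2 : ℕ) ≠ (i1 : ℕ) + d' →
        evalWith (fun a b : Arr d (MvPolynomial (Fin n × Fin d × Fin d) F) =>
            a * b + b * a) (Z F n d) m i1 i2 i3 = 0) ∧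
    (∀ (i1 i2 : Fin (d + 1)) (i3 : Fin d),
        (i2 : ℕ) = (i1 : ℕ) + d' → d < (i3 : ℕ) + l →
        evalWith (fun a b : Arr d (MvPolynomial (Fin n × Fin d × Fin d) F) =>
            a * b + b * a) (Z F n d) m i1 i2 i3 = 0) :=
  entries_of_anticommutator_eval_at_Z_general n d m d' l hdeg hdepth

end NAPIT
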